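/- (Level-1 characterization, from the proof of Theorem 3.3) For all α, β ∈ ℂ, the vector v = α·e(0,1,0) + β·e(0,0,1) satisfies A₋v = c₊v = c₋v = 0 if and only if α(h−f) = 0 and β(h+f) = 0. In particular, a singular vector at level 1 exists if and only if h = f or h = −f. -/

import Mathlib

/-!
Verma module `M(h,f)` over the ℤ₂×ℤ₂ graded superalgebra of Rittenberg–Wyler,
realized on the space of finitely supported functions `ℕ × Fin 2 × Fin 2 →₀ ℂ`,
with basis vectors `e k μ ν`.
-/

noncomputable section

/-- Index set for the basis of the Verma module. -/
abbrev Idx : Type := ℕ × Fin 2 × Fin 2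

/-- The underlying space of the Verma module `M(h,f)`. -/
abbrev Mmod : Type := Idx →₀ ℂ

/-- The standard basis vector `e(k,μ,ν)`. -/
def e (k : ℕ) (μ ν : Fin 2) : Mmod := Finsupp.single (k, μ, ν) 1

/-- Build a linear operator on `Mmod` from its values on basis vectors. -/
def mkOp (φ : Idx → Mmod) : Mmod →ₗ[ℂ] Mmod := Finsupp.lift Mmod ℂ Idx φ

/-- The lowering operator `A₋`.
`A₋ e(k,μ,ν) = 4k(h+k+μ+ν−1)·e(k−1,μ,ν) + 4(h+f)·δ_{μ,1}δ_{ν,1}·e(k,0,0)`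
(with the convention `e(−1,μ,ν) = 0`, automatic since the coefficient vanishes at `k = 0`). -/
def Am (h f : ℂ) : Mmod →ₗ[ℂ] Mmod :=
  mkOp fun p =>
    (4 * (p.1 : ℂ) * (h + (p.1 : ℂ) + ((p.2.1 : ℕ) : ℂ) + ((p.2.2 : ℕ) : ℂ) - 1))
        • e (p.1 - 1) p.2.1 p.2.2
    + (if p.2.1 = 1 ∧ p.2.2 = 1 then (4 * (h + f)) • e p.1 0 0 else 0)

/-- The lowering operator `c₊`.
`c₊ e(k,μ,ν) = 2(h+2k+2ν−f)·δ_{μ,1}·e(k,0,ν) + (−1)^μ·2k·δ_{ν,0}·e(k−1,μ,1)`. -/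
def cp (h f : ℂ) : Mmod →ₗ[ℂ] Mmod :=
  mkOp fun p =>
    (if p.2.1 = 1 then
        (2 * (h + 2 * (p.1 : ℂ) + 2 * ((p.2.2 : ℕ) : ℂ) - f)) • e p.1 0 p.2.2 else 0)
    + (if p.2.2 = 0 then
        ((-1 : ℂ) ^ (p.2.1 : ℕ) * (2 * (p.1 : ℂ))) • e (p.1 - 1) p.2.1 1 else 0)

/-- The lowering operator `c₋`.
`c₋ e(k,μ,ν) = (−1)^μ·2(h+f)·δ_{ν,1}·e(k,μ,0) + 2k·δ_{μ,0}·e(k−1,1,ν)`. -/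
def cm (h f : ℂ) : Mmod →ₗ[ℂ] Mmod :=
  mkOp fun p =>
    (if p.2.2 = 1 then
        ((-1 : ℂ) ^ (p.2.1 : ℕ) * (2 * (h + f))) • e p.1 p.2.1 0 else 0)
    + (if p.2.1 = 0 then (2 * (p.1 : ℂ)) • e (p.1 - 1) 1 p.2.2 else 0)

/-- The raising operator `A₊`: `A₊ e(k,μ,ν) = e(k+1,μ,ν)`. -/
def Ap : Mmod →ₗ[ℂ] Mmod := mkOp fun p => e (p.1 + 1) p.2.1 p.2.2

/-- The raising operator `d₊`: `d₊ e(k,μ,ν) = δ_{μ,0}·e(k,1,ν)`. -/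
def dp : Mmod →ₗ[ℂ] Mmod := mkOp fun p => if p.2.1 = 0 then e p.1 1 p.2.2 else 0

/-- The raising operator `d₋`:
`d₋ e(k,μ,ν) = (−1)^μ·δ_{ν,0}·e(k,μ,1) + 2·δ_{μ,1}·e(k+1,0,ν)`. -/
def dm : Mmod →ₗ[ℂ] Mmod :=
  mkOp fun p =>
    (if p.2.2 = 0 then ((-1 : ℂ) ^ (p.2.1 : ℕ)) • e p.1 p.2.1 1 else 0)
    + (if p.2.1 = 1 then (2 : ℂ) • e (p.1 + 1) 0 p.2.2 else 0)

/-- The Cartan operator `N`: `N e(k,μ,ν) = (h+2k+μ+ν)·e(k,μ,ν)`. -/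
def Nop (h : ℂ) : Mmod →ₗ[ℂ] Mmod :=
  mkOp fun p =>
    (h + 2 * (p.1 : ℂ) + ((p.2.1 : ℕ) : ℂ) + ((p.2.2 : ℕ) : ℂ)) • e p.1 p.2.1 p.2.2

/-- The Cartan operator `F̃`: `F̃ e(k,μ,ν) = (f+μ−ν)·e(k,μ,ν)`. -/
def Fop (f : ℂ) : Mmod →ₗ[ℂ] Mmod :=
  mkOp fun p =>
    (f + ((p.2.1 : ℕ) : ℂ) - ((p.2.2 : ℕ) : ℂ)) • e p.1 p.2.1 p.2.2

/-- The set of basis vectors of level `m` (the level of `e(k,μ,ν)` is `2k+μ+ν`). -/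
def levelVecs (m : ℕ) : Set Mmod :=
  {v | ∃ (k : ℕ) (μ ν : Fin 2), 2 * k + (μ : ℕ) + (ν : ℕ) = m ∧ v = e k μ ν}

/-- `v` is a singular vector at level `m ≥ 1`: it is nonzero, lies in the span of the
level-`m` basis vectors, and is annihilated by `A₋`, `c₊` and `c₋`. -/
def IsSingular (h f : ℂ) (m : ℕ) (v : Mmod) : Prop :=
  1 ≤ m ∧ v ≠ 0 ∧ v ∈ Submodule.span ℂ (levelVecs m) ∧
    Am h f v = 0 ∧ cp h f v = 0 ∧ cm h f v = 0

/-!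
On level 1 every term of `A₋`, `c₊`, `c₋` that lowers `k` has the vanishing factor `k`, and the
`δ_{μ,1}δ_{ν,1}` term of `A₋` needs level 2. So `α·e(0,1,0) + β·e(0,0,1)` is sent to `0`,
`2α(h−f)·e(0,0,0)` and `2β(h+f)·e(0,0,0)`: a nonzero level-1 vector can only be singular if
`h = f` (where `e(0,1,0)` is singular) or `h = −f` (where `e(0,0,1)` is).
-/

@[simp]
lemma mkOp_e (φ : Idx → Mmod) (k : ℕ) (μ ν : Fin 2) : mkOp φ (e k μ ν) = φ (k, μ, ν) := by
  simp [mkOp, e]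

lemma smul_e_eq_zero_iff {c : ℂ} {k : ℕ} {μ ν : Fin 2} : c • e k μ ν = 0 ↔ c = 0 := by
  simp [e, Finsupp.smul_single]

lemma e_ne_zero (k : ℕ) (μ ν : Fin 2) : e k μ ν ≠ 0 := by
  simp [e]

section LevelOne

variable (h f : ℂ)

@[simp] lemma Am_e010 : Am h f (e 0 1 0) = 0 := by simp [Am]
@[simp] lemma Am_e001 : Am h f (e 0 0 1) = 0 := by simp [Am]
@[simp] lemma cp_e010 : cp h f (e 0 1 0) = (2 * (h - f)) • e 0 0 0 := by simp [cp]
@[simp] lemma cp_e001 : cp h f (e 0 0 1) = 0 := by simp [cp]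
@[simp] lemma cm_e010 : cm h f (e 0 1 0) = 0 := by simp [cm]
@[simp] lemma cm_e001 : cm h f (e 0 0 1) = (2 * (h + f)) • e 0 0 0 := by simp [cm]

end LevelOne

lemma levelVecs_one : levelVecs 1 = {e 0 1 0, e 0 0 1} := by
  ext v
  constructor
  · rintro ⟨k, μ, ν, hlevel, rfl⟩
    obtain rfl : k = 0 := by omega
    fin_cases μ <;> fin_cases ν <;> simp_all
  · rintro (rfl | rfl)
    exacts [⟨0, 1, 0, rfl, rfl⟩, ⟨0, 0, 1, rfl, rfl⟩]

lemma mem_span_levelVecs_one {v : Mmod} :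
    v ∈ Submodule.span ℂ (levelVecs 1) ↔ ∃ α β : ℂ, α • e 0 1 0 + β • e 0 0 1 = v := by
  rw [levelVecs_one, Submodule.mem_span_pair]

lemma annihilated_level_one_iff (h f α β : ℂ) :
    (Am h f (α • e 0 1 0 + β • e 0 0 1) = 0 ∧
     cp h f (α • e 0 1 0 + β • e 0 0 1) = 0 ∧
     cm h f (α • e 0 1 0 + β • e 0 0 1) = 0) ↔
    (α * (h - f) = 0 ∧ β * (h + f) = 0) := by
  simp only [map_add, map_smul, Am_e010, Am_e001, cp_e010, cp_e001, cm_e010, cm_e001,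
    smul_zero, add_zero, zero_add, smul_smul, smul_e_eq_zero_iff, true_and, mul_left_comm α 2,
    mul_left_comm β 2, mul_eq_zero (a := (2 : ℂ)), two_ne_zero, false_or]

/-- Level-1 characterization (from the proof of Theorem 3.3):
`v = α·e(0,1,0) + β·e(0,0,1)` is annihilated by `A₋`, `c₊`, `c₋` iff
`α(h−f) = 0` and `β(h+f) = 0`; in particular a singular vector at level 1 exists
iff `h = f` or `h = −f`. -/
theorem level_one_characterization (h f : ℂ) :
    (∀ α β : ℂ,
      (Am h f (α • e 0 1 0 + β • e 0 0 1) = 0 ∧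
       cp h f (α • e 0 1 0 + β • e 0 0 1) = 0 ∧
       cm h f (α • e 0 1 0 + β • e 0 0 1) = 0) ↔
      (α * (h - f) = 0 ∧ β * (h + f) = 0)) ∧
    ((∃ v : Mmod, IsSingular h f 1 v) ↔ (h = f ∨ h = -f)) := by
  refine ⟨annihilated_level_one_iff h f, ⟨?_, ?_⟩⟩
  · rintro ⟨v, -, hv0, hspan, hA, hcp, hcm⟩
    obtain ⟨α, β, rfl⟩ := mem_span_levelVecs_one.1 hspan
    obtain ⟨hα, hβ⟩ := (annihilated_level_one_iff h f α β).1 ⟨hA, hcp, hcm⟩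
    by_contra! hne
    obtain rfl : α = 0 := (mul_eq_zero.1 hα).resolve_right (sub_ne_zero.2 hne.1)
    obtain rfl : β = 0 := (mul_eq_zero.1 hβ).resolve_right (mt add_eq_zero_iff_eq_neg.1 hne.2)
    exact hv0 (by simp)
  · rintro (rfl | rfl)
    · exact ⟨e 0 1 0, le_rfl, e_ne_zero 0 1 0, Submodule.subset_span ⟨0, 1, 0, rfl, rfl⟩,
        by simp⟩
    · exact ⟨e 0 0 1, le_rfl, e_ne_zero 0 0 1, Submodule.subset_span ⟨0, 0, 1, rfl, rfl⟩,
        by simp⟩
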